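/- Let S³ = {x ∈ ℝ⁴ : ‖x‖ = 1}, f(x) = x₀², and v(x) = 2x₀·e₀ − 2x₀²·x the Riemannian gradient of f on S³. Then for x ∈ S³, v(x) = 0 if and only if x₀ = 0, or x = e₀, or x = −e₀. Consequently the critical set of f on S³ is the disjoint union of the equatorial 2-sphere f⁻¹(0) = {x ∈ S³ : x₀ = 0} and the two points f⁻¹(1) = {e₀, −e₀}; in particular the focal variety f⁻¹(0) is a hypersurface (codimension 1), so f is a transnormal (indeed isoparametric) function on S³ that is not properly transnormal. -/

import Mathlib

noncomputable section

/-- The Riemannian gradient on `S³` of `f(x) = x₀²`, i.e. the tangential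
projection `v(x) = 2x₀·e₀ − 2x₀²·x` of the Euclidean gradient. -/
def sphereGrad (x : EuclideanSpace ℝ (Fin 4)) : EuclideanSpace ℝ (Fin 4) :=
  (2 * x 0) • EuclideanSpace.single (0 : Fin 4) (1 : ℝ) - (2 * (x 0) ^ 2) • x

/-- For `x` in the round `S³ ⊂ ℝ⁴`, the Riemannian gradient
`v(x) = 2x₀e₀ − 2x₀²x` of `f(x) = x₀²` vanishes iff `x₀ = 0` or `x = ±e₀`.
Consequently the critical set of `f` is the disjoint union of the equatorial
2-sphere `f⁻¹(0)` and the two points `f⁻¹(1) = {e₀, −e₀}`; since the focal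
variety `f⁻¹(0)` is a hypersurface, `f` is a transnormal (indeed
isoparametric) function on `S³` which is not properly transnormal. -/
theorem critical_set_of_x0_sq_on_S3 (x : EuclideanSpace ℝ (Fin 4))
    (hx : ‖x‖ = 1) :
    sphereGrad x = 0 ↔
      x 0 = 0 ∨ x = EuclideanSpace.single (0 : Fin 4) (1 : ℝ) ∨
        x = -EuclideanSpace.single (0 : Fin 4) (1 : ℝ) := by
  constructor
  · intro h
    by_cases h0 : x 0 = 0
    · exact Or.inl h0
    · right
      have h1 : (2 * x 0) • EuclideanSpace.single (0 : Fin 4) (1 : ℝ)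
          = (2 * (x 0) ^ 2) • x := by
        have := sub_eq_zero.mp (h ▸ rfl : sphereGrad x = 0)
        simpa [sphereGrad] using sub_eq_zero.mp h
      have h2 : x = (x 0)⁻¹ • EuclideanSpace.single (0 : Fin 4) (1 : ℝ) := by
        have h3 : (2 * (x 0) ^ 2) • x
            = (2 * (x 0) ^ 2) • ((x 0)⁻¹ • EuclideanSpace.single (0 : Fin 4) (1 : ℝ)) := by
          rw [← h1, smul_smul]
          congr 1
          field_simp
        have hne : (2 * (x 0) ^ 2) ≠ 0 := by positivity
        exact smul_right_injective _ hne h3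
      have hnorm : |x 0| = 1 := by
        have hc := congrArg norm h2
        rw [hx, norm_smul, EuclideanSpace.norm_single] at hc
        simpa using hc.symm
      rcases abs_eq (by norm_num : (0:ℝ) ≤ 1) |>.mp hnorm with h4 | h4 <;>
        rw [h2, h4]
      · left; norm_num
      · right
        ext i
        rcases eq_or_ne i 0 with hi | hi
        · simp only [hi, PiLp.smul_apply, PiLp.neg_apply, EuclideanSpace.single_apply,
            if_pos rfl, smul_eq_mul]
          norm_num
        · simp [EuclideanSpace.single_apply, hi]
  · rintro (h0 | h1 | h1)
    · simp [sphereGrad, h0]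
    · have : x 0 = 1 := by rw [h1]; simp [EuclideanSpace.single_apply]
      rw [sphereGrad, this, h1]
      ext i; simp
    · have : x 0 = -1 := by rw [h1]; simp [EuclideanSpace.single_apply]
      rw [sphereGrad, this, h1]
      ext i; simp
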